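/- For λ > 0 sufficiently large, the mountain-pass level satisfies c_a < (1/3) S^{3/2}, where S is the best Sobolev constant for the embedding D^{1,2}(ℝ³) ↪ L⁶(ℝ³). -/

import Mathlib

noncomputable section

open MeasureTheory Real Set Filter Topology Metric

/-- Euclidean space `ℝ³`. -/
abbrev E3 : Type := EuclideanSpace ℝ (Fin 3)

/-- The (a.e. defined) gradient of a function `u : ℝ³ → ℝ`. -/
def grad (u : E3 → ℝ) (x : E3) : E3 := gradient u x

/-- The Newtonian (Poisson) potential `φ_u(x) = (1/4π) ∫ u(y)²/|x−y| dy`. -/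
def phiFun (u : E3 → ℝ) (x : E3) : ℝ :=
  (1 / (4 * π)) * ∫ y : E3, (u y) ^ 2 / ‖x - y‖

/-- Positive part `u⁺`. -/
def uplus (u : E3 → ℝ) (x : E3) : ℝ := max (u x) 0

/-- Membership in `H¹(ℝ³)` (differentiable representative with `u, ∇u ∈ L²`). -/
def MemH1 (u : E3 → ℝ) : Prop :=
  Differentiable ℝ u ∧ MemLp u 2 (volume : Measure E3) ∧
    MemLp (grad u) 2 (volume : Measure E3)

/-- Squared `H¹` norm: `∫|∇u|² + ∫u²`. -/
def H1normSq (u : E3 → ℝ) : ℝ :=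
  (∫ x : E3, ‖grad u x‖ ^ 2) + ∫ x : E3, (u x) ^ 2

/-- `H¹` norm. -/
def H1norm (u : E3 → ℝ) : ℝ := Real.sqrt (H1normSq u)

/-- `H¹` distance. -/
def H1dist (u v : E3 → ℝ) : ℝ := H1norm (u - v)

/-- The limiting energy functional `I_a`. -/
def Ia (a lam p : ℝ) (u : E3 → ℝ) : ℝ :=
  (1 / 2) * (∫ x : E3, ‖grad u x‖ ^ 2)
    + (a / 2) * (∫ x : E3, (u x) ^ 2)
    + (1 / 4) * (∫ x : E3, phiFun u x * (u x) ^ 2)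
    - (lam / p) * (∫ x : E3, uplus u x ^ p)
    - (1 / 6) * (∫ x : E3, uplus u x ^ 6)

/-- The functional `G_a = 2⟨I_a′(u),u⟩ − P_a(u)`. -/
def Ga (a lam p : ℝ) (u : E3 → ℝ) : ℝ :=
  (3 / 2) * (∫ x : E3, ‖grad u x‖ ^ 2)
    + (a / 2) * (∫ x : E3, (u x) ^ 2)
    + (3 / 4) * (∫ x : E3, phiFun u x * (u x) ^ 2)
    - ((2 * p - 3) / p) * lam * (∫ x : E3, uplus u x ^ p)
    - (3 / 2) * (∫ x : E3, uplus u x ^ 6)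

/-- The manifold `M_a = {u ∈ H¹ \ {0} : G_a(u) = 0}`. -/
def Ma (a lam p : ℝ) : Set (E3 → ℝ) :=
  {u | MemH1 u ∧ u ≠ 0 ∧ Ga a lam p u = 0}

/-- The scaling `u_t(x) = t² u(tx)`. -/
def scale (t : ℝ) (u : E3 → ℝ) : E3 → ℝ := fun x => t ^ 2 * u (t • x)

/-- The Fréchet derivative pairing `⟨I_a′(u), v⟩`. -/
def IaDeriv (a lam p : ℝ) (u v : E3 → ℝ) : ℝ :=
  (∫ x : E3, (inner ℝ (grad u x) (grad v x) : ℝ))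
    + a * (∫ x : E3, u x * v x)
    + (∫ x : E3, phiFun u x * u x * v x)
    - lam * (∫ x : E3, uplus u x ^ (p - 1) * v x)
    - (∫ x : E3, uplus u x ^ 5 * v x)

/-- Continuity of a path `γ : [0,1] → H¹(ℝ³)` w.r.t. the `H¹` distance. -/
def PathCts (γ : ℝ → E3 → ℝ) : Prop :=
  ∀ s ∈ Icc (0:ℝ) 1, ∀ ε > (0:ℝ), ∃ δ > (0:ℝ),
    ∀ t ∈ Icc (0:ℝ) 1, |t - s| < δ → H1dist (γ t) (γ s) < ε

/-- The admissible mountain-pass paths `Γ_a`. -/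
def GammaA (a lam p : ℝ) : Set (ℝ → E3 → ℝ) :=
  {γ | PathCts γ ∧ (∀ t ∈ Icc (0:ℝ) 1, MemH1 (γ t)) ∧ γ 0 = 0 ∧ Ia a lam p (γ 1) < 0}

/-- The mountain-pass level `c_a`. -/
def ca (a lam p : ℝ) : ℝ :=
  sInf ((fun γ => sSup ((fun t => Ia a lam p (γ t)) '' Icc (0:ℝ) 1)) '' GammaA a lam p)

/-- `⟨I_a′(u_n), ·⟩ → 0` in the dual of `H¹`. -/
def DerivTendstoZero (a lam p : ℝ) (u : ℕ → E3 → ℝ) : Prop :=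
  ∃ err : ℕ → ℝ, Tendsto err atTop (𝓝 0) ∧
    ∀ n, ∀ v : E3 → ℝ, MemH1 v → |IaDeriv a lam p (u n) v| ≤ err n * H1norm v

/-- Critical point of `I_a` on `H¹(ℝ³)`. -/
def IsCritA (a lam p : ℝ) (u : E3 → ℝ) : Prop :=
  ∀ v : E3 → ℝ, MemH1 v → IaDeriv a lam p u v = 0

/-- Best Sobolev constant for `D^{1,2}(ℝ³) ↪ L⁶(ℝ³)`. -/
def SobolevS : ℝ :=
  sInf {s | ∃ u : E3 → ℝ, Differentiable ℝ u ∧ MemLp u 6 (volume : Measure E3) ∧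
    MemLp (grad u) 2 (volume : Measure E3) ∧ (∫ x : E3, |u x| ^ 6) = 1 ∧
    s = ∫ x : E3, ‖grad u x‖ ^ 2}

/-- The set `S_a` of ground states `U` of the limiting problem with `U(0) = max U`. -/
def SaSet (a lam p : ℝ) : Set (E3 → ℝ) :=
  {U | MemH1 U ∧ (∀ x, 0 < U x) ∧ IsCritA a lam p U ∧ Ia a lam p U = ca a lam p ∧
    ∀ x, U x ≤ U 0}

open scoped ENNReal

/-!
Along the ray `t ↦ t u` through a nonnegative bump `u`, for `t ∈ [0, 1]` one has
`I_a(t u) ≤ M t² - (λ/p) (∫ u^p) t^p`. Since `p > 2`, the supremum of the right-hand side over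
`t ≥ 0` tends to `0` as `λ → ∞`, while the endpoint `t = 1` eventually has negative energy; so the
ray is an admissible path and `c_a → 0`.

On the other side `S ≥ 1/16`. On every coordinate line, `u⁴(x) ≤ ∫ |∂ᵢ(u⁴)| ≤ ∫ (u⁶/2 + 8|∇u|²)`
by the fundamental theorem of calculus and `4|u|³|v| ≤ u⁶/2 + 8v²` (integrability of the right-hand
side makes `u⁴` small somewhere far out on the line). Multiplying the three square roots of these
bounds and applying the Gagliardo–Nirenberg grid-lines inequality gives
`∫ u⁶ ≤ (∫ u⁶/2 + 8|∇u|²)^{3/2}`, which for `∫ u⁶ = 1` forces `∫ |∇u|² ≥ 1/16`.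
-/

lemma grad_const_mul {u : E3 → ℝ} (hu : Differentiable ℝ u) (t : ℝ) :
    grad (fun x => t * u x) = fun x => t • grad u x := by
  funext x
  simp only [grad, gradient, fderiv_const_mul (hu x) t, map_smul]

lemma norm_grad (u : E3 → ℝ) (x : E3) : ‖grad u x‖ = ‖fderiv ℝ u x‖ :=
  (InnerProductSpace.toDual ℝ E3).symm.norm_map _

lemma memH1_of_contDiff_of_hasCompactSupport {u : E3 → ℝ} (hu : ContDiff ℝ 1 u)
    (hcs : HasCompactSupport u) : MemH1 u := by
  have hgrad : Continuous (grad u) :=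
    (InnerProductSpace.toDual ℝ E3).symm.continuous.comp (hu.continuous_fderiv one_ne_zero)
  have hgrad_cs : HasCompactSupport (grad u) := hcs.fderiv (𝕜 := ℝ) |>.comp_left (map_zero _)
  exact ⟨hu.differentiable one_ne_zero, hu.continuous.memLp_of_hasCompactSupport hcs,
    hgrad.memLp_of_hasCompactSupport hgrad_cs⟩

namespace ContDiffBump

variable {c : E3} (f : ContDiffBump c)

lemma memH1 : MemH1 f :=
  memH1_of_contDiff_of_hasCompactSupport f.contDiff f.hasCompactSupport

lemma integral_rpow_pos {q : ℝ} (hq : 0 < q) : 0 < ∫ x, f x ^ q := by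
  have hcont : Continuous fun x => f x ^ q := f.continuous.rpow_const fun _ => Or.inr hq.le
  refine hcont.integral_pos_of_hasCompactSupport_nonneg_nonzero
    (f.hasCompactSupport.comp_left (g := (· ^ q)) (Real.zero_rpow hq.ne'))
    (fun x => Real.rpow_nonneg f.nonneg q) (x := c) ?_
  simp [f.one_of_mem_closedBall (mem_closedBall_self f.rIn_pos.le)]

end ContDiffBump

lemma phiFun_nonneg (u : E3 → ℝ) (x : E3) : 0 ≤ phiFun u x :=
  mul_nonneg (by positivity) (integral_nonneg fun y => by positivity)

lemma phiFun_const_mul (u : E3 → ℝ) (t : ℝ) (x : E3) :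
    phiFun (fun y => t * u y) x = t ^ 2 * phiFun u x := by
  simp only [phiFun, mul_pow, mul_div_assoc, integral_const_mul]
  ring

lemma uplus_const_mul (u : E3 → ℝ) {t : ℝ} (ht : 0 ≤ t) (x : E3) :
    uplus (fun y => t * u y) x = t * uplus u x := by
  simp only [uplus, mul_max_of_nonneg _ _ ht, mul_zero]

lemma Ia_zero (a lam : ℝ) {p : ℝ} (hp : p ≠ 0) : Ia a lam p 0 = 0 := by
  simp [Ia, grad, gradient, phiFun, uplus, Real.zero_rpow hp]

lemma Ia_const_mul (a lam p : ℝ) {u : E3 → ℝ} (hu : Differentiable ℝ u) {t : ℝ} (ht : 0 ≤ t) :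
    Ia a lam p (fun x => t * u x)
      = (1 / 2) * t ^ 2 * (∫ x, ‖grad u x‖ ^ 2) + (a / 2) * t ^ 2 * (∫ x, u x ^ 2)
        + (1 / 4) * t ^ 4 * (∫ x, phiFun u x * u x ^ 2)
        - (lam / p) * t ^ p * (∫ x, uplus u x ^ p) - (1 / 6) * t ^ 6 * (∫ x, uplus u x ^ 6) := by
  have hrpow : ∀ x, (t * uplus u x) ^ p = t ^ p * uplus u x ^ p := fun x =>
    Real.mul_rpow ht (le_max_right _ _)
  simp only [Ia, grad_const_mul hu, norm_smul, phiFun_const_mul, uplus_const_mul u ht, hrpow,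
    mul_pow, Real.norm_eq_abs, sq_abs]
  simp only [show ∀ x, t ^ 2 * phiFun u x * (t ^ 2 * u x ^ 2) = t ^ 4 * (phiFun u x * u x ^ 2)
    from fun x => by ring, integral_const_mul]
  ring

lemma Ia_const_mul_le (a lam p : ℝ) {u : E3 → ℝ} (hu : Differentiable ℝ u) {t : ℝ}
    (ht₀ : 0 ≤ t) (ht₁ : t ≤ 1) :
    Ia a lam p (fun x => t * u x)
      ≤ ((1 / 2) * (∫ x, ‖grad u x‖ ^ 2) + (a / 2) * (∫ x, u x ^ 2)
          + (1 / 4) * (∫ x, phiFun u x * u x ^ 2)) * t ^ 2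
        - (lam / p * ∫ x, uplus u x ^ p) * t ^ p := by
  have hC : 0 ≤ ∫ x, phiFun u x * u x ^ 2 :=
    integral_nonneg fun x => mul_nonneg (phiFun_nonneg u x) (sq_nonneg _)
  have hE : 0 ≤ ∫ x, uplus u x ^ 6 :=
    integral_nonneg fun x => pow_nonneg (le_max_right _ _) 6
  have ht4 : t ^ 4 ≤ t ^ 2 := pow_le_pow_of_le_one ht₀ ht₁ (by norm_num)
  rw [Ia_const_mul a lam p hu ht₀]
  nlinarith [mul_le_mul_of_nonneg_left ht4 hC, pow_nonneg ht₀ 6]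

lemma H1norm_const_mul {u : E3 → ℝ} (hu : Differentiable ℝ u) (t : ℝ) :
    H1norm (fun x => t * u x) = |t| * H1norm u := by
  simp only [H1norm, H1normSq, grad_const_mul hu, norm_smul, mul_pow, Real.norm_eq_abs, sq_abs,
    integral_const_mul, ← mul_add]
  rw [Real.sqrt_mul (sq_nonneg t), Real.sqrt_sq_eq_abs]

lemma pathCts_of_H1dist_le {γ : ℝ → E3 → ℝ} {K : ℝ}
    (h : ∀ s t, H1dist (γ t) (γ s) ≤ K * |t - s|) : PathCts γ := by
  intro s _ ε hε
  refine ⟨ε / (|K| + 1), by positivity, fun t _ hts => ?_⟩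
  calc H1dist (γ t) (γ s) ≤ K * |t - s| := h s t
    _ ≤ (|K| + 1) * |t - s| := by gcongr; linarith [le_abs_self K]
    _ < (|K| + 1) * (ε / (|K| + 1)) := by gcongr
    _ = ε := by field_simp

lemma const_mul_mem_GammaA {a lam p : ℝ} {u : E3 → ℝ} (hu : MemH1 u)
    (hneg : Ia a lam p u < 0) : (fun t x => t * u x) ∈ GammaA a lam p := by
  refine ⟨pathCts_of_H1dist_le (K := H1norm u) fun s t => le_of_eq ?_,
    fun t _ => ⟨hu.1.const_mul t, hu.2.1.const_mul t, ?_⟩, by simp [Pi.zero_def],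
    by simpa using hneg⟩
  · have : (fun x => t * u x) - (fun x => s * u x) = fun x => (t - s) * u x := by
      funext x; simp only [Pi.sub_apply]; ring
    rw [H1dist, this, H1norm_const_mul hu.1, mul_comm]
  · rw [grad_const_mul hu.1]
    exact hu.2.2.const_smul t

lemma ca_le_of_mem_GammaA {a lam p B : ℝ} (hp : p ≠ 0) {γ : ℝ → E3 → ℝ}
    (hγ : γ ∈ GammaA a lam p)
    (hB : ∀ t ∈ Icc (0 : ℝ) 1, Ia a lam p (γ t) ≤ B) : ca a lam p ≤ B := by
  have hbdd : BddBelow ((fun γ => sSup ((fun t => Ia a lam p (γ t)) '' Icc (0 : ℝ) 1))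
      '' GammaA a lam p) := by
    refine ⟨0, ?_⟩
    rintro _ ⟨γ', hγ', rfl⟩
    refine Real.sSup_nonneg' ⟨_, ⟨0, left_mem_Icc.2 zero_le_one, rfl⟩, ?_⟩
    show 0 ≤ Ia a lam p (γ' 0)
    rw [hγ'.2.2.1, Ia_zero a lam hp]
  refine (csInf_le hbdd ⟨γ, hγ, rfl⟩).trans (csSup_le ?_ ?_)
  · exact (nonempty_Icc.2 zero_le_one).image _
  · rintro _ ⟨t, ht, rfl⟩
    exact hB t ht

lemma eventually_mul_sq_sub_mul_rpow_le (M : ℝ) {p ε : ℝ} (hp : 2 ≤ p) (hε : 0 < ε) :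
    ∀ᶠ L in atTop, ∀ t ≥ 0, M * t ^ 2 - L * t ^ p ≤ ε := by
  set M' := max M 1
  have hM' : 0 < M' := lt_max_of_lt_right one_pos
  set τ := √(ε / M')
  have hτ : 0 < τ := Real.sqrt_pos.2 (div_pos hε hM')
  have hMτ : M' * τ ^ 2 = ε := by
    rw [Real.sq_sqrt (div_pos hε hM').le]; field_simp
  have hτp : 0 < τ ^ (p - 2) := Real.rpow_pos_of_pos hτ _
  filter_upwards [eventually_ge_atTop (M' / τ ^ (p - 2))] with L hL t ht
  have hL0 : 0 ≤ L := (div_pos hM' hτp).le.trans hL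
  have hMt : M * t ^ 2 ≤ M' * t ^ 2 := mul_le_mul_of_nonneg_right (le_max_left _ _) (sq_nonneg t)
  rcases le_or_gt t τ with htτ | hτt
  · have : M' * t ^ 2 ≤ M' * τ ^ 2 := by gcongr
    nlinarith [Real.rpow_nonneg ht p]
  · -- beyond `τ` the term `L t^p = (L t^(p-2)) t²` dominates `M' t²`
    have hsplit : t ^ p = t ^ (p - 2) * t ^ 2 := by
      rw [← Real.rpow_natCast, ← Real.rpow_add' ht (by norm_num; linarith)]; norm_num
    have hLt : M' ≤ L * t ^ (p - 2) :=
      calc M' = M' / τ ^ (p - 2) * τ ^ (p - 2) := by field_simp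
        _ ≤ L * t ^ (p - 2) := by gcongr
    nlinarith [mul_le_mul_of_nonneg_right hLt (sq_nonneg t)]

lemma eventually_ca_le (a : ℝ) {p ε : ℝ} {u : E3 → ℝ} (hu : MemH1 u)
    (hpos : 0 < ∫ x, uplus u x ^ p) (hp : 2 ≤ p) (hε : 0 < ε) :
    ∀ᶠ lam in atTop, ca a lam p ≤ ε := by
  have hp0 : 0 < p := by linarith
  set M := (1 / 2) * (∫ x, ‖grad u x‖ ^ 2) + (a / 2) * (∫ x, u x ^ 2)
    + (1 / 4) * (∫ x, phiFun u x * u x ^ 2)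
  have hcoeff : Tendsto (fun lam => lam / p * ∫ x, uplus u x ^ p) atTop atTop :=
    (tendsto_id.atTop_div_const hp0).atTop_mul_const hpos
  filter_upwards [hcoeff.eventually (eventually_mul_sq_sub_mul_rpow_le M hp hε),
    hcoeff.eventually (eventually_gt_atTop M)] with lam hsmall hlarge
  have hbound : ∀ t ∈ Icc (0 : ℝ) 1, Ia a lam p (fun x => t * u x) ≤ ε := fun t ht =>
    (Ia_const_mul_le a lam p hu.1 ht.1 ht.2).trans (hsmall t ht.1)
  have hneg : Ia a lam p u < 0 := by
    have := Ia_const_mul_le a lam p hu.1 zero_le_one le_rfl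
    simp only [one_mul, one_pow, Real.one_rpow, mul_one] at this
    exact this.trans_lt (sub_neg.2 hlarge)
  exact ca_le_of_mem_GammaA hp0.ne' (const_mul_mem_GammaA hu hneg) hbound

lemma abs_four_mul_pow_three_mul_le (x y : ℝ) : |4 * x ^ 3 * y| ≤ x ^ 6 / 2 + 8 * y ^ 2 := by
  rw [abs_le]
  constructor <;> nlinarith [sq_nonneg (x ^ 3 + 4 * y), sq_nonneg (x ^ 3 - 4 * y)]

lemma le_integral_abs_deriv {g g' : ℝ → ℝ} (hg : ∀ t, HasDerivAt g (g' t) t)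
    (hg' : Integrable g') {x : ℝ} (hsmall : ∀ δ > 0, ∃ a ≤ x, g a < δ) :
    g x ≤ ∫ t, |g' t| := by
  refine le_of_forall_pos_le_add fun δ hδ => ?_
  obtain ⟨a, hax, hga⟩ := hsmall δ hδ
  have hftc : ∫ t in a..x, g' t = g x - g a :=
    intervalIntegral.integral_eq_sub_of_hasDerivAt (fun t _ => hg t) hg'.intervalIntegrable
  have hle : ∫ t in a..x, g' t ≤ ∫ t, |g' t| :=
    calc ∫ t in a..x, g' t ≤ ∫ t in Ioc a x, |g' t| := by
          rw [intervalIntegral.integral_of_le hax]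
          exact setIntegral_mono_on hg'.integrableOn hg'.abs.integrableOn measurableSet_Ioc
            fun t _ => le_abs_self _
      _ ≤ ∫ t, |g' t| := setIntegral_le_integral hg'.abs (ae_of_all _ fun t => abs_nonneg _)
  linarith

lemma exists_lt_of_lintegral_ne_top {F : ℝ → ℝ}
    (hF : ∫⁻ t, ENNReal.ofReal (F t) ≠ ⊤) (x : ℝ) {c : ℝ} (hc : 0 < c) : ∃ a ≤ x, F a < c := by
  by_contra! hge
  refine hF (top_le_iff.1 ?_)
  calc (⊤ : ℝ≥0∞) = ∫⁻ _ in Iic x, ENNReal.ofReal c := by simp [hc]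
    _ ≤ ∫⁻ t in Iic x, ENNReal.ofReal (F t) :=
        setLIntegral_mono' measurableSet_Iic fun t ht => ENNReal.ofReal_le_ofReal (hge t ht)
    _ ≤ ∫⁻ t, ENNReal.ofReal (F t) := setLIntegral_le_lintegral _ _

lemma ofReal_pow_four_le_lintegral {φ φ' : ℝ → ℝ} (hφ : ∀ t, HasDerivAt φ (φ' t) t)
    (hφ' : Measurable φ') (x : ℝ) :
    ENNReal.ofReal (φ x ^ 4) ≤ ∫⁻ t, ENNReal.ofReal (φ t ^ 6 / 2 + 8 * φ' t ^ 2) := by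
  set F : ℝ → ℝ := fun t => φ t ^ 6 / 2 + 8 * φ' t ^ 2
  by_cases hK : ∫⁻ t, ENNReal.ofReal (F t) = ⊤
  · simp [F, hK]
  have hφc : Continuous φ := continuous_iff_continuousAt.2 fun t => (hφ t).continuousAt
  have hF : Integrable F :=
    ⟨(by fun_prop : Measurable F).aestronglyMeasurable,
      (hasFiniteIntegral_iff_ofReal (ae_of_all _ fun t => by positivity)).2 (Ne.lt_top hK)⟩
  have hD : ∀ t, HasDerivAt (fun s => φ s ^ 4) (4 * φ t ^ 3 * φ' t) t := fun t => by
    simpa using (hφ t).fun_pow 4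
  have hDF : ∀ t, |4 * φ t ^ 3 * φ' t| ≤ F t := fun t => abs_four_mul_pow_three_mul_le _ _
  have hDint : Integrable fun t => 4 * φ t ^ 3 * φ' t :=
    hF.mono' (by fun_prop : Measurable fun t => 4 * φ t ^ 3 * φ' t).aestronglyMeasurable
      (ae_of_all _ hDF)
  -- `F < (√δ)³/2` at a point forces `φ⁴ < δ` there, and `F` is small somewhere left of `x`
  have hsmall : ∀ δ > 0, ∃ a ≤ x, φ a ^ 4 < δ := by
    intro δ hδ
    obtain ⟨a, hax, ha⟩ := exists_lt_of_lintegral_ne_top hK x (c := √δ ^ 3 / 2) (by positivity)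
    refine ⟨a, hax, ?_⟩
    simp only [F] at ha
    have h6 : (φ a ^ 2) ^ 3 < √δ ^ 3 := by nlinarith [sq_nonneg (φ' a)]
    have h2 : φ a ^ 2 < √δ := lt_of_pow_lt_pow_left₀ 3 (Real.sqrt_nonneg δ) h6
    calc φ a ^ 4 = (φ a ^ 2) ^ 2 := by ring
      _ < √δ ^ 2 := pow_lt_pow_left₀ h2 (by positivity) two_ne_zero
      _ = δ := Real.sq_sqrt hδ.le
  calc ENNReal.ofReal (φ x ^ 4) ≤ ENNReal.ofReal (∫ t, F t) := by
        refine ENNReal.ofReal_le_ofReal ((le_integral_abs_deriv hD hDint hsmall).trans ?_)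
        exact integral_mono hDint.abs hF hDF
    _ = ∫⁻ t, ENNReal.ofReal (F t) :=
        ofReal_integral_eq_lintegral_ofReal hF (ae_of_all _ fun t => by positivity)

lemma ofReal_pow_four_le_lintegral_line {ι : Type*} [Fintype ι] [DecidableEq ι]
    {u : EuclideanSpace ℝ ι → ℝ} (hu : Differentiable ℝ u) (y : ι → ℝ) (i : ι) :
    ENNReal.ofReal (u (WithLp.toLp 2 y) ^ 4) ≤ ∫⁻ t, ENNReal.ofReal
      (u (WithLp.toLp 2 (Function.update y i t)) ^ 6 / 2
        + 8 * ‖fderiv ℝ u (WithLp.toLp 2 (Function.update y i t))‖ ^ 2) := by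
  set ℓ : ℝ → EuclideanSpace ℝ ι := fun t => WithLp.toLp 2 (Function.update y i t)
  set e : EuclideanSpace ℝ ι := EuclideanSpace.single i 1
  have hℓ : ∀ t, HasDerivAt ℓ e t := fun t =>
    (PiLp.continuousLinearEquiv 2 ℝ fun _ : ι => ℝ).symm.hasFDerivAt.comp_hasDerivAt t
      (hasDerivAt_update y i t)
  have hℓc : Continuous ℓ := continuous_iff_continuousAt.2 fun t => (hℓ t).continuousAt
  have hφ : ∀ t, HasDerivAt (fun s => u (ℓ s)) (fderiv ℝ u (ℓ t) e) t := fun t =>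
    (hu (ℓ t)).hasFDerivAt.comp_hasDerivAt t (hℓ t)
  have hle := ofReal_pow_four_le_lintegral hφ
    ((measurable_fderiv_apply_const ℝ u e).comp hℓc.measurable) (y i)
  have hℓy : ℓ (y i) = WithLp.toLp 2 y := by simp [ℓ]
  rw [hℓy] at hle
  refine hle.trans (lintegral_mono fun t => ENNReal.ofReal_le_ofReal ?_)
  have hde : |fderiv ℝ u (ℓ t) e| ≤ ‖fderiv ℝ u (ℓ t)‖ := by
    simpa [e] using (fderiv ℝ u (ℓ t)).le_opNorm e
  have : (fderiv ℝ u (ℓ t) e) ^ 2 ≤ ‖fderiv ℝ u (ℓ t)‖ ^ 2 := by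
    simpa using sq_le_sq' (abs_le.1 hde).1 (abs_le.1 hde).2
  linarith

lemma lintegral_ofReal_pow_six_le {u : E3 → ℝ} (hu : Differentiable ℝ u) :
    ∫⁻ x, ENNReal.ofReal (u x ^ 6)
      ≤ (∫⁻ x, ENNReal.ofReal (u x ^ 6 / 2 + 8 * ‖fderiv ℝ u x‖ ^ 2)) ^ (3 / 2 : ℝ) := by
  set f : E3 → ℝ≥0∞ := fun x => ENNReal.ofReal (u x ^ 6 / 2 + 8 * ‖fderiv ℝ u x‖ ^ 2)
  have hmp := PiLp.volume_preserving_toLp (Fin 3)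
  have hemb : MeasurableEmbedding (WithLp.toLp 2 : (Fin 3 → ℝ) → E3) :=
    (MeasurableEquiv.toLp 2 (Fin 3 → ℝ)).measurableEmbedding
  rw [← hmp.lintegral_comp_emb hemb, ← hmp.lintegral_comp_emb hemb]
  have hf : Measurable fun y => f (WithLp.toLp 2 y) :=
    (((hu.continuous.measurable.pow_const 6).div_const 2).add
      (((measurable_fderiv ℝ u).norm.pow_const 2).const_mul 8)).ennreal_ofReal.comp
      hemb.measurable
  have hholder : Real.HolderConjugate (Fintype.card (Fin 3)) (3 / 2) := by
    constructor <;> norm_num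
  have hgrid := lintegral_prod_lintegral_pow_le (fun _ => volume) hholder hf
  rw [← volume_pi] at hgrid
  refine le_trans (lintegral_mono fun y => ?_) hgrid
  have hexp : (1 : ℝ) / ((Fintype.card (Fin 3) : ℝ) - 1) = 2⁻¹ := by norm_num
  have hu6 : ENNReal.ofReal (u (WithLp.toLp 2 y) ^ 6)
      = ∏ _i : Fin 3, ENNReal.ofReal (u (WithLp.toLp 2 y) ^ 2) := by
    rw [Finset.prod_const, Finset.card_univ, Fintype.card_fin, ← ENNReal.ofReal_pow (sq_nonneg _),
      ← pow_mul]
  rw [hexp, hu6]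
  refine Finset.prod_le_prod' fun i _ => (ENNReal.le_rpow_inv_iff two_pos).2 ?_
  rw [ENNReal.rpow_two, ← ENNReal.ofReal_pow (sq_nonneg _), ← pow_mul]
  exact ofReal_pow_four_le_lintegral_line hu y i

lemma one_div_sixteen_le_integral_norm_grad_sq {u : E3 → ℝ} (hu : Differentiable ℝ u)
    (hu6 : MemLp u 6) (hgrad : MemLp (grad u) 2) (hnorm : ∫ x, |u x| ^ 6 = 1) :
    1 / 16 ≤ ∫ x, ‖grad u x‖ ^ 2 := by
  have hpow6 : ∀ x, |u x| ^ 6 = u x ^ 6 := fun x => Even.pow_abs ⟨3, rfl⟩ _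
  have hint6 : Integrable fun x => u x ^ 6 := by
    simpa [hpow6] using hu6.integrable_norm_pow (p := 6) (by norm_num)
  have hint2 : Integrable fun x => ‖fderiv ℝ u x‖ ^ 2 := by
    simpa [norm_grad] using hgrad.integrable_norm_pow (p := 2) (by norm_num)
  have hlhs : ∫⁻ x, ENNReal.ofReal (u x ^ 6) = 1 := by
    rw [← ofReal_integral_eq_lintegral_ofReal hint6 (ae_of_all _ fun x => by positivity)]
    simp [← hpow6, hnorm]
  have hrhs : ∫⁻ x, ENNReal.ofReal (u x ^ 6 / 2 + 8 * ‖fderiv ℝ u x‖ ^ 2)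
      = ENNReal.ofReal (1 / 2 + 8 * ∫ x, ‖grad u x‖ ^ 2) := by
    have hint : Integrable fun x => u x ^ 6 / 2 + 8 * ‖fderiv ℝ u x‖ ^ 2 :=
      (hint6.div_const 2).add (hint2.const_mul 8)
    rw [← ofReal_integral_eq_lintegral_ofReal hint (ae_of_all _ fun x => by positivity),
      integral_add (hint6.div_const 2) (hint2.const_mul 8), integral_div, integral_const_mul]
    simp [← hpow6, hnorm, norm_grad]
  have key := lintegral_ofReal_pow_six_le hu
  rw [hlhs, hrhs] at key
  have : 1 ≤ ENNReal.ofReal (1 / 2 + 8 * ∫ x, ‖grad u x‖ ^ 2) := by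
    by_contra! hlt
    exact (ENNReal.rpow_lt_one hlt (by norm_num)).not_ge key
  linarith [ENNReal.one_le_ofReal.1 this]

lemma one_div_sixteen_le_sobolevS : 1 / 16 ≤ SobolevS := by
  set f : ContDiffBump (0 : E3) := default
  set I := ∫ x, f x ^ (6 : ℝ)
  have hI : 0 < I := f.integral_rpow_pos (by norm_num)
  set κ := I ^ (-(1 / 6) : ℝ)
  have hκ : κ ^ 6 * I = 1 := by
    rw [← Real.rpow_natCast, ← Real.rpow_mul hI.le]
    norm_num [Real.rpow_neg_one, inv_mul_cancel₀ hI.ne']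
  obtain ⟨hfd, -, hfgrad⟩ := f.memH1
  refine le_csInf ⟨_, fun x => κ * f x, hfd.const_mul κ,
    (f.continuous.memLp_of_hasCompactSupport f.hasCompactSupport).const_mul κ,
    by rw [grad_const_mul hfd]; exact hfgrad.const_smul κ, ?_, rfl⟩ ?_
  · have hpow : ∀ x, |f x| ^ 6 = f x ^ (6 : ℝ) := fun x => by
      rw [abs_of_nonneg f.nonneg, ← Real.rpow_natCast]; norm_num
    simp_rw [abs_mul, mul_pow, integral_const_mul, hpow]
    rwa [Even.pow_abs ⟨3, rfl⟩]
  · rintro s ⟨u, hu, hu6, hgrad, hnorm, rfl⟩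
    exact one_div_sixteen_le_integral_norm_grad_sq hu hu6 hgrad hnorm

theorem statement_5_general (a p : ℝ) (hp : 3 < p) :
    ∃ lam0 > (0:ℝ), ∀ lam : ℝ, lam0 ≤ lam →
      ca a lam p < (1 / 3) * SobolevS ^ ((3:ℝ) / 2) := by
  have hS : 0 < (1 / 3) * SobolevS ^ ((3:ℝ) / 2) :=
    mul_pos (by norm_num) (Real.rpow_pos_of_pos (by linarith [one_div_sixteen_le_sobolevS]) _)
  set f : ContDiffBump (0 : E3) := default
  have hpos : 0 < ∫ x, uplus f x ^ p := by
    simpa [uplus, max_eq_left f.nonneg] using f.integral_rpow_pos (by linarith)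
  obtain ⟨L, hL⟩ := eventually_atTop.1 (eventually_ca_le a f.memH1 hpos (by linarith) (half_pos hS))
  exact ⟨max L 1, by positivity,
    fun lam hlam => (hL lam (le_of_max_le_left hlam)).trans_lt (half_lt_self hS)⟩

/-- for `λ > 0` sufficiently large, `c_a < (1/3) S^{3/2}`. -/
theorem statement_5 (a p : ℝ) (ha : 0 < a) (hp : 3 < p) (hp' : p ≤ 4) :
    ∃ lam0 > (0:ℝ), ∀ lam : ℝ, lam0 ≤ lam →
      ca a lam p < (1 / 3) * SobolevS ^ ((3:ℝ) / 2) :=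
  statement_5_general a p hp
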